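/- Let S^sym be the WSTTS of a signal σ and a TSWA W. For every reachable symbolic state (l,Z,ā) ∈ Reach(S^sym), either ā = ε, or there exists t ≥ 0 such that for all ν ∈ Z, ā = Values(σ([t,ν(T)))). -/

import Mathlib

attribute [local instance] Classical.propDecidable

namespace QTPM

/-- Comparison operators `<, ≤, >, ≥` used in constraints, guards and zones. -/
inductive CmpOp : Type
  | lt | le | gt | ge

/-- Semantics of a comparison operator on reals. -/
def CmpOp.eval : CmpOp → ℝ → ℝ → Prop
  | .lt, a, b => a < b
  | .le, a, b => a ≤ b
  | .gt, a, b => a > b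
  | .ge, a, b => a ≥ b

/-- A semiring `𝕊 = (S, ⊕, ⊗, e⊕, e⊗)`: `(S,⊕,e⊕)` a commutative monoid,
`(S,⊗,e⊗)` a monoid, `⊗` distributing over `⊕` on both sides, `e⊕` absorbing for `⊗`. -/
class CSemiring (S : Type) : Type where
  add : S → S → S
  mul : S → S → S
  zero : S
  one : S
  add_assoc : ∀ a b c : S, add (add a b) c = add a (add b c)
  add_comm : ∀ a b : S, add a b = add b a
  add_zero : ∀ a : S, add a zero = a
  mul_assoc : ∀ a b c : S, mul (mul a b) c = mul a (mul b c)
  mul_one : ∀ a : S, mul a one = a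
  one_mul : ∀ a : S, mul one a = a
  left_distrib : ∀ a b c : S, mul a (add b c) = add (mul a b) (mul a c)
  right_distrib : ∀ a b c : S, mul (add a b) c = add (mul a c) (mul b c)
  zero_mul : ∀ a : S, mul zero a = zero
  mul_zero : ∀ a : S, mul a zero = zero

/-- A semiring is idempotent if `s ⊕ s = s` for every `s`. -/
def Idem (S : Type) [CSemiring S] : Prop := ∀ s : S, CSemiring.add s s = s

/-- The canonical order of a semiring: `s ⪯ s'` iff `s ⊕ s' = s'`. -/
def csLe {S : Type} [CSemiring S] (s s' : S) : Prop := CSemiring.add s s' = s'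

/-- A complete semiring: every (possibly infinite) family has a sum `⊕`, extending the
binary sum, invariant under partitions of the index set, and over which `⊗` distributes
on both sides. -/
class CompleteCSemiring (S : Type) [CSemiring S] : Type 1 where
  iSum : {ι : Type} → (ι → S) → S
  iSum_empty : ∀ f : Empty → S, iSum f = CSemiring.zero
  iSum_single : ∀ f : Unit → S, iSum f = f ()
  iSum_pair : ∀ f : Bool → S, iSum f = CSemiring.add (f true) (f false)
  iSum_partition : ∀ {ι κ : Type} (p : ι → κ) (f : ι → S),
    iSum f = iSum fun k : κ => iSum fun i : {i : ι // p i = k} => f i.1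
  mul_iSum : ∀ {ι : Type} (s : S) (f : ι → S),
    CSemiring.mul s (iSum f) = iSum fun i => CSemiring.mul s (f i)
  iSum_mul : ∀ {ι : Type} (f : ι → S) (s : S),
    CSemiring.mul (iSum f) s = iSum fun i => CSemiring.mul (f i) s

/-- A piecewise-constant signal `σ = a₁^{τ₁} ⋯ a_n^{τ_n}`: a finite list of
(value, duration) pairs with positive durations. -/
structure Signal (X : Type) : Type where
  entries : List ((X → ℝ) × ℝ)
  pos : ∀ e ∈ entries, (0:ℝ) < e.2

namespace Signal

variable {X : Type}

/-- A default entry, used as a fallback value for out-of-range indexing. -/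
noncomputable def dflt (X : Type) : (X → ℝ) × ℝ := (fun _ => 0, 1)

/-- Prefix sums of the durations: `pref σ i = τ₁ + ⋯ + τᵢ`. -/
noncomputable def pref (σ : Signal X) (i : ℕ) : ℝ := ((σ.entries.take i).map Prod.snd).sum

/-- The duration `|σ| = τ₁ + ⋯ + τ_n` of a signal. -/
noncomputable def dur (σ : Signal X) : ℝ := (σ.entries.map Prod.snd).sum

/-- The number `n` of entries of the signal. -/
def len (σ : Signal X) : ℕ := σ.entries.length

/-- The value `a_{i+1}` of the `i`-th entry (0-indexed). -/
noncomputable def val (σ : Signal X) (i : ℕ) : X → ℝ := (σ.entries.getD i (dflt X)).1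

/-- The value `σ(t)` of the signal at time `t`: the value `a_k` where
`τ₁+⋯+τ_{k-1} ≤ t < τ₁+⋯+τ_k`. -/
noncomputable def valAt (σ : Signal X) (t : ℝ) : X → ℝ :=
  σ.val ((List.range σ.len).findIdx fun i => decide (t < σ.pref (i+1)))

end Signal

/-- Stutter-free sequences: the elements of `(ℝ^X)^⊛` (no two equal consecutive values). -/
def StutterFree {V : Type} (l : List V) : Prop := l.Chain' (· ≠ ·)

/-- Absorbing concatenation `∘` of (stutter-free) sequences: concatenate and merge
equal consecutive elements. -/
noncomputable def absCat {V : Type} (l l' : List V) : List V :=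
  List.destutter (· ≠ ·) (l ++ l')

/-- `Values(σ([t,t')))`: the stutter-free sequence of values of `σ` on the
interval `[t,t')`. -/
noncomputable def Signal.valuesOn {X : Type} (σ : Signal X) (t t' : ℝ) : List (X → ℝ) :=
  List.destutter (· ≠ ·)
    (((List.range σ.len).filter fun i => decide (σ.pref i < t' ∧ t < σ.pref (i+1))).map σ.val)

/-- The restriction `σ([t,t'))` of a signal to the interval `[t,t')`. -/
noncomputable def Signal.restrict {X : Type} (σ : Signal X) (t t' : ℝ) : Signal X where
  entries := (List.range σ.len).filterMap fun i =>
    if h : max (σ.pref i) t < min (σ.pref (i+1)) t' then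
      some (σ.val i, min (σ.pref (i+1)) t' - max (σ.pref i) t)
    else none
  pos := by
    intro e he
    rw [List.mem_filterMap] at he
    obtain ⟨i, -, hi⟩ := he
    by_cases h : max (σ.pref i) t < min (σ.pref (i+1)) t'
    · rw [dif_pos h] at hi
      injection hi with h'
      subst h'
      simpa using sub_pos.mpr h
    · rw [dif_neg h] at hi
      exact absurd hi (by simp)

/-- The constant signal `a^t`. -/
noncomputable def constSignal {X : Type} (a : X → ℝ) (t : ℝ) : Signal X where
  entries := if h : (0:ℝ) < t then [(a, t)] else []
  pos := by
    intro e he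
    by_cases h : (0:ℝ) < t
    · rw [dif_pos h] at he
      simp only [List.mem_singleton] at he
      subst he
      exact h
    · rw [dif_neg h] at he
      simp at he

/-- Clock guards: finite conjunctions of `c ⋈ d` with `d ∈ ℤ≥0`. -/
abbrev Guard (C : Type) : Type := List (C × CmpOp × ℕ)

/-- Constraints over the variables `X`: finite conjunctions of `x ⋈ d` with `d ∈ ℝ`. -/
abbrev VarConstraint (X : Type) : Type := List (X × CmpOp × ℝ)

/-- A timed symbolic automaton (TSA) over `ℝ`, with locations `L` and clocks `C`. -/
structure TSA (X L C : Type) : Type where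
  L₀ : Set L
  LF : Set L
  Δ : Set (L × Guard C × Set C × L)
  Δ_finite : Δ.Finite
  Λ : L → VarConstraint X

/-- A timed symbolic weighted automaton (TSWA) over `ℝ` and a complete semiring `S`:
a TSA together with a cost function `κ`. -/
structure TSWA (X L C S : Type) [CSemiring S] [CompleteCSemiring S]
    extends TSA X L C : Type where
  κ : VarConstraint X → List (X → ℝ) → S

/-- Satisfaction `ν ⊨ g` of a clock guard. -/
def guardSat {C : Type} (ν : C → ℝ) (g : Guard C) : Prop :=
  ∀ p ∈ g, p.2.1.eval (ν p.1) (p.2.2 : ℝ)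

/-- The reset `ν[ρ := 0]` of a clock valuation. -/
noncomputable def resetVal {C : Type} (ν : C → ℝ) (ρ : Set C) : C → ℝ :=
  fun c => if c ∈ ρ then 0 else ν c

/-- States of the WTTS: `(l, ν, t, ā)`. -/
abbrev WState (X L C : Type) : Type := L × (C → ℝ) × ℝ × List (X → ℝ)

/-- The state space `Q` of the WTTS of `σ` and a TSWA. -/
def wttsQ {X L C : Type} (σ : Signal X) : Set (WState X L C) :=
  {q | (∀ c, 0 ≤ q.2.1 c) ∧ 0 ≤ q.2.2.1 ∧ q.2.2.1 ≤ σ.dur ∧ StutterFree q.2.2.2}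

/-- The initial states `Q₀ = {(l₀, 0⃗, 0, ε) | l₀ ∈ L₀}` of the WTTS. -/
def wttsQ0 {X L C : Type} (A : TSA X L C) : Set (WState X L C) :=
  {q | q.1 ∈ A.L₀ ∧ q.2.1 = (fun _ => 0) ∧ q.2.2.1 = 0 ∧ q.2.2.2 = []}

/-- The accepting states `Q_F = {(l_F, ν, |σ|, ε) | l_F ∈ L_F}` of the WTTS. -/
def wttsQF {X L C : Type} (σ : Signal X) (A : TSA X L C) : Set (WState X L C) :=
  {q | q.1 ∈ A.LF ∧ (∀ c, 0 ≤ q.2.1 c) ∧ q.2.2.1 = σ.dur ∧ q.2.2.2 = []}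

/-- The transition relation `→` of the WTTS of `σ` and (the TSA of) a TSWA:
either a discrete transition of the TSA, or time elapse. -/
def wttsStep {X L C : Type} (σ : Signal X) (A : TSA X L C)
    (q q' : WState X L C) : Prop :=
  q ∈ wttsQ σ ∧ q' ∈ wttsQ σ ∧
  ((∃ g ρ, (q.1, g, ρ, q'.1) ∈ A.Δ ∧ guardSat q.2.1 g ∧ q'.2.1 = resetVal q.2.1 ρ ∧
      q'.2.2.1 = q.2.2.1 ∧ q.2.2.2 ≠ [] ∧ q'.2.2.2 = []) ∨
   (q.1 = q'.1 ∧ ∃ τ : ℝ, 0 < τ ∧ q'.2.1 = (fun c => q.2.1 c + τ) ∧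
      q'.2.2.1 = q.2.2.1 + τ ∧
      q'.2.2.2 = absCat q.2.2.2 (σ.valuesOn q.2.2.1 (q.2.2.1 + τ))))

/-- The weight of a WTTS transition: `κ(Λ(l), ā)` if `ā' = ε`, and `e⊗` otherwise. -/
noncomputable def wttsWeight {X L C S : Type} [CSemiring S] [CompleteCSemiring S]
    (W : TSWA X L C S) (q q' : WState X L C) : S :=
  if q'.2.2.2 = [] then W.κ (W.Λ q.1) q.2.2.2 else CSemiring.one

/-- A path of a transition system: a finite sequence of states related by
consecutive transitions. -/
def IsPath {Q : Type} (step : Q → Q → Prop) (π : List Q) : Prop := π.Chain' step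

/-- The path value: the `⊗`-product of the weights of the transitions of a path. -/
noncomputable def pathVal {Q S : Type} [CSemiring S] [CompleteCSemiring S]
    (w : Q → Q → S) : List Q → S
  | [] => CSemiring.one
  | [_] => CSemiring.one
  | q :: q' :: r => CSemiring.mul (w q q') (pathVal w (q' :: r))

/-- The set of paths from a state of `A` to a state of `B`. -/
def PathsBetween {Q : Type} (step : Q → Q → Prop) (A B : Set Q) : Set (List Q) :=
  {π | IsPath step π ∧ (∃ a ∈ A, π.head? = some a) ∧ (∃ b ∈ B, π.getLast? = some b)}

/-- The shortest distance from `A` to `B`: the `⊕`-sum, over all paths from `A` to `B`,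
of the `⊗`-product of the transition weights. -/
noncomputable def sDist {Q S : Type} [CSemiring S] [CompleteCSemiring S]
    (step : Q → Q → Prop) (w : Q → Q → S) (A B : Set Q) : S :=
  CompleteCSemiring.iSum fun π : ↥(PathsBetween step A B) => pathVal w π.1

/-- The trace value `α(S)` of the WTTS `S` of `σ` and `W`: the shortest distance from
the initial states to the accepting states, i.e. `⊕_{π ∈ ARuns(S)} μ(π)`. -/
noncomputable def traceValue {X L C S : Type} [CSemiring S] [CompleteCSemiring S]
    (σ : Signal X) (W : TSWA X L C S) : S :=
  sDist (wttsStep σ W.toTSA) (wttsWeight W) (wttsQ0 W.toTSA) (wttsQF σ W.toTSA)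

/-- The clocks `C ⊔ {T}`: `none` is the fresh clock `T` tracking absolute time. -/
abbrev ClockT (C : Type) : Type := Option C

/-- Symbolic states of the WSTTS: `(l, Z, ā)`. -/
abbrev SymState (X L C : Type) : Type := L × Set (ClockT C → ℝ) × List (X → ℝ)

/-- A zone over the clock set `C'`: a set of clock valuations defined by a finite
conjunction of constraints `c ⋈ d` and `c − c' ⋈ d`. -/
def IsZone {C' : Type} (Z : Set (C' → ℝ)) : Prop :=
  ∃ atoms : List ((C' × CmpOp × ℝ) ⊕ (C' × C' × CmpOp × ℝ)),
    Z = {ν | ∀ a ∈ atoms,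
      match a with
      | .inl p => p.2.1.eval (ν p.1) p.2.2
      | .inr p => p.2.2.1.eval (ν p.1 - ν p.2.1) p.2.2.2}

/-- The symbolic state space `Q^sym` of the WSTTS of `σ` and a TSWA. -/
def symQ {X L C : Type} (σ : Signal X) : Set (SymState X L C) :=
  {q | IsZone q.2.1 ∧ q.2.1.Nonempty ∧ (∀ ν ∈ q.2.1, ν none ≤ σ.dur) ∧
    StutterFree q.2.2 ∧
    (q.2.2 = [] ∨ ∀ ν ∈ q.2.1, absCat q.2.2 [σ.valAt (ν none)] = q.2.2)}

/-- The all-zero clock valuation over `C ⊔ {T}`. -/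
noncomputable def zeroValT {C : Type} : ClockT C → ℝ := fun _ => 0

/-- The initial symbolic states `Q₀^sym = {(l₀, {0⃗}, ε) | l₀ ∈ L₀}`. -/
def symQ0 {X L C : Type} (A : TSA X L C) : Set (SymState X L C) :=
  {q | q.1 ∈ A.L₀ ∧ q.2.1 = {zeroValT} ∧ q.2.2 = []}

/-- The accepting symbolic states
`Q_F^sym = {(l_F, Z, ε) ∈ Q^sym | ∃ν ∈ Z, ν(T) = |σ|}`. -/
def symQF {X L C : Type} (σ : Signal X) (A : TSA X L C) : Set (SymState X L C) :=
  {q | q ∈ symQ σ ∧ q.1 ∈ A.LF ∧ q.2.2 = [] ∧ ∃ ν ∈ q.2.1, ν none = σ.dur}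

/-- The reset `ν[ρ := 0]` of a valuation over `C ⊔ {T}` (the clock `T` is never reset). -/
noncomputable def symResetVal {C : Type} (ν : ClockT C → ℝ) (ρ : Set C) : ClockT C → ℝ :=
  fun c => match c with
    | none => ν none
    | some c' => if c' ∈ ρ then 0 else ν (some c')

/-- The up-closure `{ν + τ | ν ∈ Z, τ > 0}` of a zone under time elapse. -/
def upClosure {C : Type} (Z : Set (ClockT C → ℝ)) : Set (ClockT C → ℝ) :=
  {ν' | ∃ ν ∈ Z, ∃ τ : ℝ, 0 < τ ∧ ν' = fun c => ν c + τ}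

/-- The transition relation `→^sym` of the WSTTS of `σ` and (the TSA of) a TSWA:
a discrete transition of the TSA, a punctual time elapse, or a non-punctual time elapse. -/
def symStep {X L C : Type} (σ : Signal X) (A : TSA X L C)
    (q q' : SymState X L C) : Prop :=
  q ∈ symQ σ ∧ q' ∈ symQ σ ∧
  ((∃ g ρ, (q.1, g, ρ, q'.1) ∈ A.Δ ∧
      q'.2.1 = {ν' | ∃ ν ∈ q.2.1, guardSat (fun c => ν (some c)) g ∧ ν' = symResetVal ν ρ} ∧
      q.2.2 ≠ [] ∧ q'.2.2 = []) ∨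
   (q.1 = q'.1 ∧
      (∃ ν ∈ q.2.1, ∃ ν' ∈ q'.2.1, q'.2.2 = absCat q.2.2 (σ.valuesOn (ν none) (ν' none))) ∧
      (∃ i, 1 ≤ i ∧ i ≤ σ.len ∧
        (q'.2.1 = upClosure q.2.1 ∩ {ν | ν none = σ.pref i} ∨
         q'.2.1 = upClosure q.2.1 ∩ {ν | σ.pref (i-1) < ν none ∧ ν none < σ.pref i}))))

/-- The weight of a WSTTS transition: `κ(Λ(l), ā)` if `ā' = ε`, and `e⊗` otherwise. -/
noncomputable def symWeight {X L C S : Type} [CSemiring S] [CompleteCSemiring S]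
    (W : TSWA X L C S) (q q' : SymState X L C) : S :=
  if q'.2.2 = [] then W.κ (W.Λ q.1) q.2.2 else CSemiring.one

/-- The symbolic trace value `α^sym(S^sym)`: the shortest distance from the initial
symbolic states to the accepting symbolic states, i.e. `⊕_{π ∈ ARuns(S^sym)} μ^sym(π)`. -/
noncomputable def symTraceValue {X L C S : Type} [CSemiring S] [CompleteCSemiring S]
    (σ : Signal X) (W : TSWA X L C S) : S :=
  sDist (symStep σ W.toTSA) (symWeight W) (symQ0 W.toTSA) (symQF σ W.toTSA)

/-- `Reach`: the initial states together with all states reachable from them. -/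
def reach {Q : Type} (step : Q → Q → Prop) (init : Set Q) : Set Q :=
  {q | ∃ q0 ∈ init, Relation.ReflTransGen step q0 q}

/-- Tuples `(l, Z, ā, s)` occurring in intermediate weights. -/
abbrev WTuple (X L C S : Type) : Type := L × Set (ClockT C → ℝ) × List (X → ℝ) × S

/-- The increment function `incr(a,t)`: maps a set `w` of tuples `(l,Z,ā,s)` to the set
of tuples `(l',Z',ā',s')` such that every `ν' ∈ Z'` satisfies `ν'(T) = t` and
`s' = ⊕_{(l,Z,ā,s)∈w} s ⊗ Dist({(l,Z,ā)},{(l',Z',ā')})` computed in the WSTTS of the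
constant signal `a^t` and `W`. -/
noncomputable def incr {X L C S : Type} [CSemiring S] [CompleteCSemiring S]
    (W : TSWA X L C S) (a : X → ℝ) (t : ℝ)
    (w : Set (WTuple X L C S)) : Set (WTuple X L C S) :=
  {p | IsZone p.2.1 ∧ StutterFree p.2.2.1 ∧ (∀ ν ∈ p.2.1, ν none = t) ∧
    p.2.2.2 = CompleteCSemiring.iSum fun q : ↥w =>
      CSemiring.mul q.1.2.2.2
        (sDist (symStep (constSignal a t) W.toTSA) (symWeight W)
          ({(q.1.1, q.1.2.1, q.1.2.2.1)} : Set (SymState X L C))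
          ({(p.1, p.2.1, p.2.2.1)} : Set (SymState X L C)))}

/-- The intermediate weight `weight_i = (incr(a_i,T_i) ∘ ⋯ ∘ incr(a₁,T₁))
({(l₀,{0⃗},ε,e⊗) | l₀ ∈ L₀})`, where `T_j = τ₁ + ⋯ + τ_j`. -/
noncomputable def weightSeq {X L C S : Type} [CSemiring S] [CompleteCSemiring S]
    (σ : Signal X) (W : TSWA X L C S) : ℕ → Set (WTuple X L C S)
  | 0 => {p | p.1 ∈ W.L₀ ∧ p.2.1 = {zeroValT} ∧ p.2.2.1 = [] ∧ p.2.2.2 = CSemiring.one}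
  | i + 1 => incr W (σ.val i) (σ.pref (i+1)) (weightSeq σ W i)

/-- The extension of a clock valuation over `C` to `C ⊔ {T}`, assigning `t` to `T`. -/
def extT {C : Type} (ν : C → ℝ) (t : ℝ) : ClockT C → ℝ :=
  fun c => match c with
    | none => t
    | some c' => ν c'

/-- The restriction `ν|_C` of a clock valuation over `C ⊔ {T}` to `C`. -/
def restrC {C : Type} (ν : ClockT C → ℝ) : C → ℝ := fun c => ν (some c)

/-- The extension of a clock valuation over `C ⊔ {T}` to `C ⊔ {T, 0}`, where the
reference clock `0` (encoded as `none`) has constant value `0`. -/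
def extRef {C : Type} (ν : ClockT C → ℝ) : Option (ClockT C) → ℝ :=
  fun c => match c with
    | none => 0
    | some c' => ν c'

/-- The canonical bound `d_{Z,c,c'}` of a zone: the least constant bounding
`ν(c) − ν(c')` over `Z` (with `∞ = ⊤` when unbounded). -/
noncomputable def zoneBound {C : Type} (Z : Set (ClockT C → ℝ))
    (c c' : Option (ClockT C)) : EReal :=
  sSup ((fun ν => ((extRef ν c - extRef ν c' : ℝ) : EReal)) '' Z)

end QTPM
/-! The invariant behind the theorem: along a run, the `T`-values of a zone all lie in one
time slice of `σ` (they compare alike with every prefix sum `τ₁ + ⋯ + τₖ`), and a nonempty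
value sequence is `Values(σ([t, ν(T))))` for a start `t` whose slice is not after that of
`ν(T)`. A time elapse from `Z` to `Z'` appends `Values(σ([ν(T), ν'(T))))`; gluing
`[t, ν(T))` with `[ν(T), ν'(T))` gives `[t, ν'(T))` up to merging the value of the slice of
`ν(T)`, which the two pieces share at most once, and the absorbing concatenation merges
exactly that repetition. -/

namespace List

section Destutter

variable {α : Type} {R : α → α → Prop} [DecidableRel R]

lemma exists_destutter'_append (l : List α) (a : α) :
    ∃ D c, l.destutter' R a = D ++ [c] ∧
      ∀ l', (l ++ l').destutter' R a = D ++ l'.destutter' R c := by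
  induction l generalizing a with
  | nil => exact ⟨[], a, rfl, fun _ => rfl⟩
  | cons b l ih =>
    by_cases h : R a b
    · obtain ⟨D, c, hl, happ⟩ := ih b
      refine ⟨a :: D, c, ?_, fun l' => ?_⟩
      · rw [destutter'_cons_pos _ h, hl, cons_append]
      · rw [cons_append, destutter'_cons_pos _ h, happ, cons_append]
    · obtain ⟨D, c, hl, happ⟩ := ih a
      exact ⟨D, c, by rw [destutter'_cons_neg _ h, hl],
        fun l' => by rw [cons_append, destutter'_cons_neg _ h, happ]⟩

lemma exists_destutter_append {l : List α} (hl : l ≠ []) :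
    ∃ D c, l.destutter R = D ++ [c] ∧
      ∀ l', (l ++ l').destutter R = D ++ l'.destutter' R c := by
  obtain ⟨a, l, rfl⟩ := exists_cons_of_ne_nil hl
  simpa only [destutter_cons', cons_append] using exists_destutter'_append l a

lemma destutter_destutter_append (l l' : List α) :
    (l.destutter R ++ l').destutter R = (l ++ l').destutter R := by
  rcases eq_or_ne l [] with rfl | hl
  · rfl
  obtain ⟨D, c, hD, happ⟩ := exists_destutter_append (R := R) hl
  obtain ⟨E, d, hE, happ'⟩ :=
    exists_destutter_append (R := R) (l := l.destutter R) (by simp [destutter_eq_nil, hl])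
  rw [destutter_idem, hD] at hE
  obtain ⟨rfl, hcd⟩ := append_inj' hE.symm rfl
  obtain rfl : d = c := by simpa using hcd
  rw [happ', happ]

end Destutter

section DestutterNe

variable {α : Type} [DecidableRel (· ≠ · : α → α → Prop)]

lemma destutter'_ne_destutter'_ne (l : List α) (a b : α) :
    (l.destutter' (· ≠ ·) a).destutter' (· ≠ ·) b = (a :: l).destutter' (· ≠ ·) b := by
  induction l generalizing a b with
  | nil => rfl
  | cons c l ih =>
    rcases eq_or_ne a c with rfl | hac
    · rw [destutter'_cons_neg _ (not_not.2 rfl), ih]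
      by_cases hba : b ≠ a
      · rw [destutter'_cons_pos _ hba, destutter'_cons_pos _ hba,
          destutter'_cons_neg _ (not_not.2 rfl)]
      · rw [destutter'_cons_neg _ hba, destutter'_cons_neg _ hba, destutter'_cons_neg _ hba]
    · rw [destutter'_cons_pos _ hac]
      by_cases hba : b ≠ a
      · rw [destutter'_cons_pos _ hba, destutter'_cons_pos _ hba, ih]
      · rw [destutter'_cons_neg _ hba, destutter'_cons_neg _ hba, ih]

lemma destutter_ne_append_destutter_ne (l l' : List α) :
    (l ++ l'.destutter (· ≠ ·)).destutter (· ≠ ·) = (l ++ l').destutter (· ≠ ·) := by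
  rcases l' with _ | ⟨b, l'⟩
  · rfl
  rcases eq_or_ne l [] with rfl | hl
  · rw [nil_append, nil_append, destutter_idem]
  obtain ⟨D, c, -, happ⟩ := exists_destutter_append (R := (· ≠ ·)) hl
  rw [happ, happ, destutter_cons', destutter'_ne_destutter'_ne]

lemma destutter_ne_append_cons_cons (l l' : List α) (x : α) :
    (l ++ x :: x :: l').destutter (· ≠ ·) = (l ++ x :: l').destutter (· ≠ ·) := by
  rw [← destutter_ne_append_destutter_ne l (x :: l'), ← destutter_ne_append_destutter_ne,
    destutter_cons', destutter_cons', destutter'_cons_neg _ (not_not.2 rfl)]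

end DestutterNe

lemma exists_filter_or_eq_append {α : Type} (p q : α → Bool) (l : List α)
    (hpq : l.Pairwise fun x y => q x → ¬ p y) :
    ∃ l₁ m l₂, m.length ≤ 1 ∧ l.filter (fun x => p x || q x) = l₁ ++ m ++ l₂ ∧
      l.filter p = l₁ ++ m ∧ l.filter q = m ++ l₂ := by
  induction l with
  | nil => exact ⟨[], [], [], by simp⟩
  | cons x l ih =>
    obtain ⟨hx, hl⟩ := pairwise_cons.1 hpq
    by_cases hqx : q x
    · have hp : l.filter p = [] := filter_eq_nil_iff.2 fun y hy => hx y hy hqx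
      have hor : l.filter (fun x => p x || q x) = l.filter q :=
        filter_congr fun y hy => by simp [hx y hy hqx]
      by_cases hpx : p x
      · exact ⟨[], [x], l.filter q, by simp [*]⟩
      · exact ⟨[], [], x :: l.filter q, by simp [*]⟩
    · obtain ⟨l₁, m, l₂, hm, hor, hp, hq⟩ := ih hl
      by_cases hpx : p x
      · exact ⟨x :: l₁, m, l₂, by simp [*]⟩
      · exact ⟨l₁, m, l₂, by simp [*]⟩

end List

namespace QTPM

namespace Signal

variable {X : Type} (σ : Signal X)

lemma pref_lt_pref_succ {i : ℕ} (h : i < σ.len) : σ.pref i < σ.pref (i + 1) := by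
  have hi : i < (σ.entries.map Prod.snd).length := by simpa [len] using h
  have hpos : 0 < (σ.entries.map Prod.snd)[i] := by
    rw [List.getElem_map]
    exact σ.pos _ (List.getElem_mem _)
  rw [pref, pref, List.map_take, List.map_take, List.sum_take_succ _ i hi]
  linarith

lemma pref_monotone : Monotone σ.pref := by
  refine monotone_nat_of_le_succ fun i => ?_
  by_cases h : i < σ.len
  · exact (σ.pref_lt_pref_succ h).le
  · have hi : σ.entries.length ≤ i := not_lt.1 h
    rw [pref, pref, List.take_of_length_le hi, List.take_of_length_le (by omega)]

def SameSlice (s s' : ℝ) : Prop :=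
  ∀ k, (σ.pref k < s ↔ σ.pref k < s') ∧ (s < σ.pref k ↔ s' < σ.pref k)

/-- The time slice of `t` is not after that of `s`. -/
def SliceLE (t s : ℝ) : Prop := ∀ k, s < σ.pref k → t < σ.pref k

variable {σ}

lemma SameSlice.refl (s : ℝ) : σ.SameSlice s s := fun _ => ⟨Iff.rfl, Iff.rfl⟩

lemma SameSlice.sliceLE {s s' : ℝ} (h : σ.SameSlice s s') : σ.SliceLE s s' :=
  fun k => (h k).2.2

lemma SliceLE.trans {t s u : ℝ} (hts : σ.SliceLE t s) (hsu : σ.SliceLE s u) :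
    σ.SliceLE t u :=
  fun k hk => hts k (hsu k hk)

lemma sliceLE_of_le {s s' : ℝ} (h : s ≤ s') : σ.SliceLE s s' :=
  fun _ hk => h.trans_lt hk

lemma sameSlice_of_mem_Ioo {i : ℕ} {s s' : ℝ}
    (hs : s ∈ Set.Ioo (σ.pref i) (σ.pref (i + 1)))
    (hs' : s' ∈ Set.Ioo (σ.pref i) (σ.pref (i + 1))) : σ.SameSlice s s' := by
  have below {s s'} (hs : s ∈ Set.Ioo (σ.pref i) (σ.pref (i + 1)))
      (hs' : s' ∈ Set.Ioo (σ.pref i) (σ.pref (i + 1))) {k : ℕ} (hk : σ.pref k < s) :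
      σ.pref k < s' :=
    (σ.pref_monotone (Nat.lt_succ_iff.1 (σ.pref_monotone.reflect_lt (hk.trans hs.2)))).trans_lt
      hs'.1
  have above {s s'} (hs : s ∈ Set.Ioo (σ.pref i) (σ.pref (i + 1)))
      (hs' : s' ∈ Set.Ioo (σ.pref i) (σ.pref (i + 1))) {k : ℕ} (hk : s < σ.pref k) :
      s' < σ.pref k :=
    hs'.2.trans_le (σ.pref_monotone (σ.pref_monotone.reflect_lt (hs.1.trans hk)))
  exact fun k => ⟨⟨below hs hs', below hs' hs⟩, ⟨above hs hs', above hs' hs⟩⟩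

lemma SameSlice.valuesOn_eq {s s' : ℝ} (h : σ.SameSlice s s') (t : ℝ) :
    σ.valuesOn t s = σ.valuesOn t s' := by
  unfold valuesOn
  congr 2
  exact List.filter_congr fun k _ => by simp only [(h k).1]

variable (σ) in
lemma absCat_valuesOn_valuesOn {t u v : ℝ} (htu : σ.SliceLE t u)
    (huv : ∀ k, σ.pref k < u → σ.pref k < v) :
    absCat (σ.valuesOn t u) (σ.valuesOn u v) = σ.valuesOn t v := by
  set p : ℕ → Bool := fun i => decide (σ.pref i < u ∧ t < σ.pref (i + 1))
  set q : ℕ → Bool := fun i => decide (σ.pref i < v ∧ u < σ.pref (i + 1))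
  have hor : (List.range σ.len).filter (fun i => decide (σ.pref i < v ∧ t < σ.pref (i + 1)))
      = (List.range σ.len).filter (fun i => p i || q i) := by
    refine List.filter_congr fun i hi => ?_
    have hi := σ.pref_lt_pref_succ (List.mem_range.1 hi)
    by_cases hiu : σ.pref i < u
    · simpa [p, q, hiu, huv i hiu] using htu (i + 1)
    · have hu : u < σ.pref (i + 1) := (not_lt.1 hiu).trans_lt hi
      simp [p, q, hiu, hu, htu _ hu]
  have hpq : (List.range σ.len).Pairwise fun a b => q a → ¬ p b :=
    List.pairwise_lt_range.imp fun {a b} hab hqa hpb => by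
      simp only [p, q, decide_eq_true_eq] at hqa hpb
      linarith [σ.pref_monotone (Nat.succ_le_of_lt hab)]
  obtain ⟨l₁, m, l₂, hm, hfor, hfp, hfq⟩ := List.exists_filter_or_eq_append p q _ hpq
  unfold absCat valuesOn
  rw [hor, hfor, hfp, hfq, List.destutter_destutter_append,
    List.destutter_ne_append_destutter_ne, List.map_append, List.map_append, List.map_append]
  match m, hm with
  | [], _ => simp
  | [x], _ => simpa using List.destutter_ne_append_cons_cons (l₁.map σ.val) (l₂.map σ.val) (σ.val x)

end Signal

section Invariant

variable {X C : Type}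

structure SymInvariant (σ : Signal X) (Z : Set (ClockT C → ℝ)) (ā : List (X → ℝ)) :
    Prop where
  time_nonneg : ∀ ν ∈ Z, 0 ≤ ν none
  sameSlice : ∀ ν ∈ Z, ∀ ν' ∈ Z, σ.SameSlice (ν none) (ν' none)
  values : ā = [] ∨
    ∃ t, 0 ≤ t ∧ ∀ ν ∈ Z, ā = σ.valuesOn t (ν none) ∧ σ.SliceLE t (ν none)

variable {σ : Signal X}

lemma symInvariant_zeroValT : SymInvariant σ {(zeroValT : ClockT C → ℝ)} [] where
  time_nonneg ν hν := by rw [hν]; rfl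
  sameSlice ν hν ν' hν' := by rw [hν, hν']; exact .refl _
  values := Or.inl rfl

lemma SymInvariant.of_forall_exists_eq {Z Z' : Set (ClockT C → ℝ)} {ā : List (X → ℝ)}
    (h : SymInvariant σ Z ā) (hZ' : ∀ ν' ∈ Z', ∃ ν ∈ Z, ν' none = ν none) :
    SymInvariant σ Z' [] where
  time_nonneg ν' hν' := by
    obtain ⟨ν, hν, hT⟩ := hZ' ν' hν'
    exact hT ▸ h.time_nonneg ν hν
  sameSlice ν₁ hν₁ ν₂ hν₂ := by
    obtain ⟨μ₁, hμ₁, hT₁⟩ := hZ' ν₁ hν₁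
    obtain ⟨μ₂, hμ₂, hT₂⟩ := hZ' ν₂ hν₂
    exact hT₁ ▸ hT₂ ▸ h.sameSlice μ₁ hμ₁ μ₂ hμ₂
  values := Or.inl rfl

lemma SymInvariant.of_timeElapse {Z Z' : Set (ClockT C → ℝ)} {ā : List (X → ℝ)}
    (h : SymInvariant σ Z ā) (hup : ∀ ν' ∈ Z', ∃ ν ∈ Z, ν none < ν' none)
    (hslice : ∀ ν ∈ Z', ∀ ν' ∈ Z', σ.SameSlice (ν none) (ν' none))
    {ν₀ ν₀' : ClockT C → ℝ} (hν₀ : ν₀ ∈ Z) (hν₀' : ν₀' ∈ Z') :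
    SymInvariant σ Z' (absCat ā (σ.valuesOn (ν₀ none) (ν₀' none))) where
  time_nonneg ν' hν' := by
    obtain ⟨ν, hν, hlt⟩ := hup ν' hν'
    exact (h.time_nonneg ν hν).trans hlt.le
  sameSlice := hslice
  values := by
    refine Or.inr ?_
    rcases h.values with rfl | ⟨t, ht, hā⟩
    · refine ⟨ν₀ none, h.time_nonneg ν₀ hν₀, fun ν' hν' => ⟨?_, ?_⟩⟩
      · rw [(hslice ν₀' hν₀' ν' hν').valuesOn_eq]
        exact List.destutter_idem _ _
      · obtain ⟨ν, hν, hlt⟩ := hup ν' hν'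
        exact (h.sameSlice ν₀ hν₀ ν hν).sliceLE.trans (Signal.sliceLE_of_le hlt.le)
    · obtain ⟨ν₁, hν₁, hlt₁⟩ := hup ν₀' hν₀'
      have hglue : absCat ā (σ.valuesOn (ν₀ none) (ν₀' none)) = σ.valuesOn t (ν₀' none) := by
        rw [(hā ν₀ hν₀).1]
        exact σ.absCat_valuesOn_valuesOn (hā ν₀ hν₀).2
          fun k hk => ((h.sameSlice ν₀ hν₀ ν₁ hν₁ k).1.1 hk).trans hlt₁
      refine ⟨t, ht, fun ν' hν' => ⟨?_, ?_⟩⟩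
      · rw [hglue, (hslice ν₀' hν₀' ν' hν').valuesOn_eq]
      · obtain ⟨ν, hν, hlt⟩ := hup ν' hν'
        exact (hā ν hν).2.trans (Signal.sliceLE_of_le hlt.le)

lemma exists_lt_of_mem_upClosure {Z : Set (ClockT C → ℝ)} {ν' : ClockT C → ℝ}
    (h : ν' ∈ upClosure Z) : ∃ ν ∈ Z, ν none < ν' none := by
  obtain ⟨ν, hν, τ, hτ, rfl⟩ := h
  exact ⟨ν, hν, lt_add_of_pos_right _ hτ⟩

lemma SymInvariant.of_symStep {L : Type} {A : TSA X L C} {q q' : SymState X L C}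
    (h : SymInvariant σ q.2.1 q.2.2) (hstep : symStep σ A q q') :
    SymInvariant σ q'.2.1 q'.2.2 := by
  obtain ⟨-, -, ⟨_, _, -, hZ', -, hā'⟩ | ⟨-, ⟨ν₀, hν₀, ν₀', hν₀', hā'⟩, i, hi, -, hZ'⟩⟩ :=
    hstep
  · rw [hā']
    refine h.of_forall_exists_eq fun ν' hν' => ?_
    rw [hZ'] at hν'
    obtain ⟨ν, hν, -, rfl⟩ := hν'
    exact ⟨ν, hν, rfl⟩
  · obtain ⟨j, rfl⟩ : ∃ j, i = j + 1 := ⟨i - 1, by omega⟩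
    have hup : ∀ ν' ∈ q'.2.1, ∃ ν ∈ q.2.1, ν none < ν' none := fun ν' hν' =>
      exists_lt_of_mem_upClosure (by rcases hZ' with hZ' | hZ' <;> exact (hZ' ▸ hν').1)
    have hslice : ∀ ν ∈ q'.2.1, ∀ ν' ∈ q'.2.1, σ.SameSlice (ν none) (ν' none) := by
      rcases hZ' with hZ' | hZ' <;> rw [hZ'] <;> rintro ν ⟨-, hν⟩ ν' ⟨-, hν'⟩
      · rw [show ν none = _ from hν, show ν' none = _ from hν']
        exact .refl _
      · exact Signal.sameSlice_of_mem_Ioo (by simpa using hν) (by simpa using hν')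
    rw [hā']
    exact h.of_timeElapse hup hslice hν₀ hν₀'

end Invariant

theorem statement5_general {X L C S : Type}
    [CSemiring S] [CompleteCSemiring S]
    (W : TSWA X L C S) (σ : Signal X) :
    ∀ q ∈ reach (symStep σ W.toTSA) (symQ0 W.toTSA),
      q.2.2 = [] ∨ ∃ t : ℝ, 0 ≤ t ∧ ∀ ν ∈ q.2.1, q.2.2 = σ.valuesOn t (ν none) := by
  rintro q ⟨q₀, hq₀, hreach⟩
  have hinv : SymInvariant σ q.2.1 q.2.2 := by
    induction hreach with
    | refl =>
      obtain ⟨-, hZ, hā⟩ := hq₀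
      rw [hZ, hā]
      exact symInvariant_zeroValT
    | tail _ hstep ih => exact ih.of_symStep hstep
  rcases hinv.values with hā | ⟨t, ht, hā⟩
  · exact Or.inl hā
  · exact Or.inr ⟨t, ht, fun ν hν => (hā ν hν).1⟩

/-- For every reachable symbolic state `(l,Z,ā)` of the WSTTS of `σ`
and `W`, either `ā = ε`, or there exists `t ≥ 0` such that for all `ν ∈ Z`,
`ā = Values(σ([t, ν(T))))`. -/
theorem statement5 {X L C S : Type} [Finite X] [Finite L] [Finite C]
    [CSemiring S] [CompleteCSemiring S]
    (W : TSWA X L C S) (σ : Signal X) :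
    ∀ q ∈ reach (symStep σ W.toTSA) (symQ0 W.toTSA),
      q.2.2 = [] ∨ ∃ t : ℝ, 0 ≤ t ∧ ∀ ν ∈ q.2.1, q.2.2 = σ.valuesOn t (ν none) :=
  statement5_general W σ

end QTPM
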